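/- (Normal ordering for the relations XZ = ZX + W, WZ = qZW, XW = qWX) Let A be a unital associative algebra over ℝ and let X, Z, W ∈ A satisfy X·Z = Z·X + W, W·Z = q·(Z·W), and X·W = q·(W·X). Then for all natural numbers m, n: X^m·Z^n = ∑_{i=0}^{m} [i]_q!·binom(n,i)_q·binom(m,i)_q·Z^{n-i}·W^i·X^{m-i}, where every term with i > n has coefficient 0 (since binom(n,i)_q = 0), so the powers Z^{n-i} there may be interpreted via truncated subtraction. -/

import Mathlib

/-- The q-integer `[n]_q = (1 - q^n)/(1 - q)`. -/
noncomputable def qInt (q : ℝ) (n : ℕ) : ℝ := (1 - q ^ n) / (1 - q)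

/-- The q-factorial `[n]_q! = [1]_q ⋯ [n]_q`, with `[0]_q! = 1`. -/
noncomputable def qFact (q : ℝ) : ℕ → ℝ
  | 0 => 1
  | n + 1 => qFact q n * qInt q (n + 1)

/-- The q-binomial coefficient `binom(n,m)_q`, with value `0` when `m > n`. -/
noncomputable def qBinom (q : ℝ) (n m : ℕ) : ℝ :=
  if m ≤ n then qFact q n / (qFact q m * qFact q (n - m)) else 0

/-!
Multiplying a normally ordered monomial `Z^a W^i X^b` on the left by `X` gives
`q^i Z^a W^i X^(b+1) + [a]_q Z^(a-1) W^(i+1) X^b`, since `X Z^a = Z^a X + [a]_q Z^(a-1) W`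
and `X W^i = q^i W^i X`. Induction on `m` then shows that the coefficient `c(m, i)` of
`Z^(n-i) W^i X^(m-i)` in `X^m Z^n` satisfies
`c(m+1, i+1) = q^(i+1) c(m, i+1) + [n-i]_q c(m, i)`. Writing `[i]_q! binom(n,i)_q` as the
descending product `[n]_q [n-1]_q ⋯ [n-i+1]_q`, this is the q-Pascal rule for `binom(m, ·)_q`.
-/

open Finset

/-- The descending q-factorial `[n]_q [n-1]_q ⋯ [n-k+1]_q`; it vanishes for `k > n` because of
the factor `[0]_q = 0`. -/
noncomputable def qDescFactorial (q : ℝ) (n k : ℕ) : ℝ :=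
  ∏ j ∈ range k, qInt q (n - j)

section QAnalogues

variable {q : ℝ}

lemma qInt_zero (q : ℝ) : qInt q 0 = 0 := by
  simp [qInt]

lemma qInt_one (hq : q ≠ 1) : qInt q 1 = 1 := by
  simp [qInt, sub_ne_zero.2 hq.symm]

lemma qInt_add (hq : q ≠ 1) (a b : ℕ) : qInt q (a + b) = qInt q a + q ^ a * qInt q b := by
  have : 1 - q ≠ 0 := sub_ne_zero.2 hq.symm
  simp only [qInt, pow_add]
  field_simp
  ring

lemma qInt_pos (hq₁ : -1 < q) (hq₂ : q < 1) {n : ℕ} (hn : n ≠ 0) : 0 < qInt q n := by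
  have hpow : q ^ n < 1 :=
    calc q ^ n ≤ |q| ^ n := (le_abs_self _).trans_eq (abs_pow q n)
      _ < 1 := pow_lt_one₀ (abs_nonneg q) (abs_lt.2 ⟨hq₁, hq₂⟩) hn
  exact div_pos (by linarith) (by linarith)

lemma qFact_pos (hq₁ : -1 < q) (hq₂ : q < 1) : ∀ n, 0 < qFact q n
  | 0 => one_pos
  | n + 1 => mul_pos (qFact_pos hq₁ hq₂ n) (qInt_pos hq₁ hq₂ n.succ_ne_zero)

lemma qDescFactorial_zero_right (q : ℝ) (n : ℕ) : qDescFactorial q n 0 = 1 :=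
  prod_range_zero _

lemma qDescFactorial_succ (q : ℝ) (n k : ℕ) :
    qDescFactorial q n (k + 1) = qDescFactorial q n k * qInt q (n - k) :=
  prod_range_succ _ _

lemma qDescFactorial_succ_succ (q : ℝ) (n k : ℕ) :
    qDescFactorial q (n + 1) (k + 1) = qInt q (n + 1) * qDescFactorial q n k := by
  simp only [qDescFactorial, prod_range_succ', Nat.add_sub_add_right, Nat.sub_zero, mul_comm]

lemma qDescFactorial_eq_zero_of_lt (q : ℝ) {n k : ℕ} (h : n < k) : qDescFactorial q n k = 0 :=
  prod_eq_zero (mem_range.2 h) (by rw [Nat.sub_self, qInt_zero])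

lemma qDescFactorial_succ_succ_eq_add (hq : q ≠ 1) (n k : ℕ) :
    qDescFactorial q (n + 1) (k + 1)
      = q ^ (k + 1) * qDescFactorial q n (k + 1) + qInt q (k + 1) * qDescFactorial q n k := by
  rw [qDescFactorial_succ_succ, qDescFactorial_succ]
  rcases le_or_gt k n with hk | hk
  · have : n + 1 = (k + 1) + (n - k) := by omega
    rw [this, qInt_add hq]
    ring
  · simp [qDescFactorial_eq_zero_of_lt q hk]

lemma qFact_add (q : ℝ) (a : ℕ) : ∀ k, qFact q (a + k) = qFact q a * qDescFactorial q (a + k) k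
  | 0 => by rw [qDescFactorial_zero_right, mul_one, Nat.add_zero]
  | k + 1 => by
    rw [← Nat.add_assoc, qDescFactorial_succ_succ, qFact, qFact_add q a k]
    ring

lemma qFact_mul_qBinom (hq₁ : -1 < q) (hq₂ : q < 1) (n k : ℕ) :
    qFact q k * qBinom q n k = qDescFactorial q n k := by
  rcases le_or_gt k n with hk | hk
  · obtain ⟨a, rfl⟩ : ∃ a, n = a + k := ⟨n - k, by omega⟩
    have ha := (qFact_pos hq₁ hq₂ a).ne'
    have hk := (qFact_pos hq₁ hq₂ k).ne'
    rw [qBinom, if_pos (Nat.le_add_left k a), Nat.add_sub_cancel, qFact_add]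
    field_simp
  · rw [qBinom, if_neg (by omega), mul_zero, qDescFactorial_eq_zero_of_lt q hk]

lemma qBinom_zero_right (hq₁ : -1 < q) (hq₂ : q < 1) (n : ℕ) : qBinom q n 0 = 1 := by
  simpa [qFact, qDescFactorial_zero_right] using qFact_mul_qBinom hq₁ hq₂ n 0

lemma qBinom_of_lt (q : ℝ) {n k : ℕ} (h : n < k) : qBinom q n k = 0 :=
  if_neg h.not_ge

lemma qBinom_succ_succ (hq₁ : -1 < q) (hq₂ : q < 1) (n k : ℕ) :
    qBinom q (n + 1) (k + 1) = q ^ (k + 1) * qBinom q n (k + 1) + qBinom q n k := by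
  have hk := (qFact_pos hq₁ hq₂ k).ne'
  have hk' := (qInt_pos hq₁ hq₂ k.succ_ne_zero).ne'
  have key := qDescFactorial_succ_succ_eq_add hq₂.ne (n := n) (k := k)
  simp only [← qFact_mul_qBinom hq₁ hq₂, qFact] at key
  apply mul_left_cancel₀ (mul_ne_zero hk hk')
  linear_combination key

end QAnalogues

lemma sum_range_smul_add_smul_succ {R M : Type*} [Semiring R] [AddCommMonoid M] [Module R M]
    {a b c : ℕ → R} (v : ℕ → M) {N : ℕ} (h0 : c 0 = a 0)
    (hsucc : ∀ i, c (i + 1) = a (i + 1) + b i) (hN : a (N + 1) = 0) :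
    ∑ i ∈ range (N + 1), (a i • v i + b i • v (i + 1)) = ∑ i ∈ range (N + 2), c i • v i := by
  have ha : ∑ i ∈ range (N + 1), a i • v i
      = ∑ i ∈ range (N + 1), a (i + 1) • v (i + 1) + a 0 • v 0 := by
    rw [← sum_range_succ' (fun i => a i • v i) (N + 1), sum_range_succ _ (N + 1), hN, zero_smul,
      add_zero]
  rw [sum_range_succ' _ (N + 1), h0, sum_add_distrib, ha]
  simp only [hsucc, add_smul, sum_add_distrib]
  abel

lemma mul_pow_eq_smul_pow_mul {R A : Type*} [CommSemiring R] [Semiring A] [Algebra R A]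
    {X W : A} {r : R} (h : X * W = r • (W * X)) (i : ℕ) : X * W ^ i = r ^ i • (W ^ i * X) := by
  induction i with
  | zero => simp
  | succ i ih =>
    rw [pow_succ, ← mul_assoc, ih, smul_mul_assoc, mul_assoc, h, mul_smul_comm, smul_smul,
      ← mul_assoc, ← pow_succ, pow_succ]

section NormalOrdering

variable {A : Type*} [Semiring A] [Algebra ℝ A] {q : ℝ} {X Z W : A}

lemma mul_pow_succ_eq_pow_succ_mul_add (hq : q ≠ 1) (hXZ : X * Z = Z * X + W)
    (hWZ : W * Z = q • (Z * W)) (k : ℕ) :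
    X * Z ^ (k + 1) = Z ^ (k + 1) * X + qInt q (k + 1) • (Z ^ k * W) := by
  induction k with
  | zero => simp [hXZ, qInt_one hq]
  | succ k ih =>
    rw [pow_succ _ (k + 1), ← mul_assoc, ih, add_mul, mul_assoc, hXZ, smul_mul_assoc, mul_assoc,
      hWZ, mul_smul_comm, smul_smul, ← mul_assoc, ← pow_succ, mul_add, ← mul_assoc, ← pow_succ,
      add_assoc, Nat.add_comm (k + 1) 1, qInt_add hq 1, qInt_one hq, pow_one, mul_comm q,
      add_smul, one_smul]

lemma mul_pow_eq_pow_mul_add (hq : q ≠ 1) (hXZ : X * Z = Z * X + W)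
    (hWZ : W * Z = q • (Z * W)) :
    ∀ k : ℕ, X * Z ^ k = Z ^ k * X + qInt q k • (Z ^ (k - 1) * W)
  | 0 => by simp [qInt_zero]
  | k + 1 => mul_pow_succ_eq_pow_succ_mul_add hq hXZ hWZ k

lemma mul_pow_mul_pow_mul_pow (hq : q ≠ 1) (hXZ : X * Z = Z * X + W)
    (hWZ : W * Z = q • (Z * W)) (hXW : X * W = q • (W * X)) (a i b : ℕ) :
    X * (Z ^ a * W ^ i * X ^ b)
      = q ^ i • (Z ^ a * W ^ i * X ^ (b + 1))
        + qInt q a • (Z ^ (a - 1) * W ^ (i + 1) * X ^ b) := by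
  calc X * (Z ^ a * W ^ i * X ^ b)
      = (X * Z ^ a) * (W ^ i * X ^ b) := by simp only [mul_assoc]
    _ = Z ^ a * ((X * W ^ i) * X ^ b)
          + qInt q a • (Z ^ (a - 1) * ((W * W ^ i) * X ^ b)) := by
        rw [mul_pow_eq_pow_mul_add hq hXZ hWZ]
        simp only [add_mul, smul_mul_assoc, mul_assoc]
    _ = _ := by
        rw [mul_pow_eq_smul_pow_mul hXW]
        simp only [smul_mul_assoc, mul_smul_comm, pow_succ', mul_assoc]

end NormalOrdering

/-- Normal ordering for the relations `XZ = ZX + W`, `WZ = qZW`, `XW = qWX`. -/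
theorem normal_ordering_XZW (q : ℝ) (hq₁ : -1 < q) (hq₂ : q < 1)
    {A : Type*} [Ring A] [Algebra ℝ A] (X Z W : A)
    (hXZ : X * Z = Z * X + W) (hWZ : W * Z = q • (Z * W)) (hXW : X * W = q • (W * X))
    (m n : ℕ) :
    X ^ m * Z ^ n =
      ∑ i ∈ Finset.range (m + 1),
        (qFact q i * qBinom q n i * qBinom q m i) •
          (Z ^ (n - i) * W ^ i * X ^ (m - i)) := by
  simp only [qFact_mul_qBinom hq₁ hq₂]
  induction m with
  | zero => simp [qDescFactorial_zero_right, qBinom_zero_right hq₁ hq₂]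
  | succ m ih =>
    calc X ^ (m + 1) * Z ^ n = X * (X ^ m * Z ^ n) := by rw [pow_succ', mul_assoc]
      _ = ∑ i ∈ range (m + 1),
            ((qDescFactorial q n i * qBinom q m i * q ^ i) •
                (Z ^ (n - i) * W ^ i * X ^ (m + 1 - i))
              + (qDescFactorial q n i * qBinom q m i * qInt q (n - i)) •
                (Z ^ (n - (i + 1)) * W ^ (i + 1) * X ^ (m + 1 - (i + 1)))) := by
        rw [ih, mul_sum]
        refine sum_congr rfl fun i hi => ?_
        rw [mul_smul_comm, mul_pow_mul_pow_mul_pow hq₂.ne hXZ hWZ hXW, smul_add, smul_smul,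
          smul_smul, Nat.sub_sub, Nat.add_sub_add_right,
          ← Nat.sub_add_comm (mem_range_succ_iff.1 hi)]
      _ = _ := by
        refine sum_range_smul_add_smul_succ _ ?_ (fun i => ?_) ?_
        · simp [qBinom_zero_right hq₁ hq₂]
        · rw [qBinom_succ_succ hq₁ hq₂, qDescFactorial_succ]
          ring
        · simp [qBinom_of_lt q (Nat.lt_succ_self m)]
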